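/- arXiv:1410.7261 — 5 statements merged into one kernel-verified Lean document; each statement's English description precedes it below -/
import Mathlib

section
/- Let S be a semicopula, μ a capacity on (X,𝒜), f : X → [0,1] measurable, and a ∈ [0,1] with f(x) + a ≤ 1 for all x. Then I(μ, f + a) = max(a, sup_{t ∈ (0, 1-a]} S(t + a, μ({x : f(x) ≥ t}))). -/
/-!
For `t ≤ a` the level set `{f + a ≥ t}` is everything, so the integrand `S(t, μ X) = t`
contributes at most `a`, and exactly `a` at `t = a`. For `t > a` the level set is `{f ≥ t - a}`,
so the substitution `s = t - a` turns the rest of the supremum into the one over `s ∈ (0, 1 - a]`.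
-/

open Set

structure IsSemicopula (S : ℝ → ℝ → ℝ) : Prop where
  mem : ∀ x ∈ Icc (0:ℝ) 1, ∀ y ∈ Icc (0:ℝ) 1, S x y ∈ Icc (0:ℝ) 1
  mono_left : ∀ y ∈ Icc (0:ℝ) 1, ∀ x₁ ∈ Icc (0:ℝ) 1, ∀ x₂ ∈ Icc (0:ℝ) 1,
    x₁ ≤ x₂ → S x₁ y ≤ S x₂ y
  mono_right : ∀ x ∈ Icc (0:ℝ) 1, ∀ y₁ ∈ Icc (0:ℝ) 1, ∀ y₂ ∈ Icc (0:ℝ) 1,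
    y₁ ≤ y₂ → S x y₁ ≤ S x y₂
  neutral_right : ∀ x ∈ Icc (0:ℝ) 1, S x 1 = x
  neutral_left : ∀ x ∈ Icc (0:ℝ) 1, S 1 x = x

structure IsCapacity {X : Type*} [MeasurableSpace X] (μ : Set X → ℝ) : Prop where
  mono : ∀ A B : Set X, A ⊆ B → μ A ≤ μ B
  empty : μ ∅ = 0
  univ : μ Set.univ = 1
  mem : ∀ A : Set X, μ A ∈ Icc (0:ℝ) 1

/-- The smallest semicopula-based integral. -/
noncomputable def scInt {X : Type*} [MeasurableSpace X]
    (S : ℝ → ℝ → ℝ) (μ : Set X → ℝ) (f : X → ℝ) : ℝ :=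
  ⨆ t : Icc (0:ℝ) 1, S t (μ {x | (t:ℝ) ≤ f x})

lemma IsSemicopula.bddAbove_range {S : ℝ → ℝ → ℝ} (hS : IsSemicopula S) {ι : Sort*}
    {u v : ι → ℝ} (hu : ∀ i, u i ∈ Icc (0:ℝ) 1) (hv : ∀ i, v i ∈ Icc (0:ℝ) 1) :
    BddAbove (range fun i => S (u i) (v i)) :=
  ⟨1, by rintro _ ⟨i, rfl⟩; exact (hS.mem _ (hu i) _ (hv i)).2⟩

lemma setOf_le_add_eq_univ {X : Type*} {f : X → ℝ} (hf : ∀ x, 0 ≤ f x) {a t : ℝ}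
    (hta : t ≤ a) :
    {x | t ≤ f x + a} = univ :=
  eq_univ_of_forall fun x => le_add_of_nonneg_of_le (hf x) hta

section Shift

variable {X : Type*} [MeasurableSpace X] {S : ℝ → ℝ → ℝ} {μ : Set X → ℝ} {f : X → ℝ}
  {a : ℝ}

lemma le_scInt (hS : IsSemicopula S) (hμ : IsCapacity μ) (g : X → ℝ) {t : ℝ}
    (ht : t ∈ Icc (0:ℝ) 1) : S t (μ {x | t ≤ g x}) ≤ scInt S μ g :=
  le_ciSup (f := fun t : Icc (0:ℝ) 1 => S t (μ {x | (t:ℝ) ≤ g x}))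
    (hS.bddAbove_range (fun t => t.2) fun _ => hμ.mem _) ⟨t, ht⟩

lemma integrand_add_const_eq_self_of_le (hS : IsSemicopula S) (hμ : IsCapacity μ)
    (hf : ∀ x, 0 ≤ f x) {t : ℝ} (ht : t ∈ Icc (0:ℝ) 1) (hta : t ≤ a) :
    S t (μ {x | t ≤ f x + a}) = t := by
  rw [setOf_le_add_eq_univ hf hta, hμ.univ, hS.neutral_right t ht]

lemma le_scInt_add_const (hS : IsSemicopula S) (hμ : IsCapacity μ)
    (hf : ∀ x, 0 ≤ f x) (ha : a ∈ Icc (0:ℝ) 1) :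
    a ≤ scInt S μ (fun x => f x + a) :=
  calc a = S a (μ {x | a ≤ f x + a}) :=
        (integrand_add_const_eq_self_of_le hS hμ hf ha le_rfl).symm
    _ ≤ scInt S μ (fun x => f x + a) := le_scInt hS hμ _ ha

lemma iSup_shifted_le_scInt_add_const (hS : IsSemicopula S) (hμ : IsCapacity μ)
    (hf : ∀ x, 0 ≤ f x) (ha : a ∈ Icc (0:ℝ) 1) :
    ⨆ t : Ioc (0:ℝ) (1 - a), S ((t:ℝ) + a) (μ {x | (t:ℝ) ≤ f x})
      ≤ scInt S μ (fun x => f x + a) := by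
  refine Real.iSup_le (fun t => ?_) (ha.1.trans (le_scInt_add_const hS hμ hf ha))
  have ht : (t:ℝ) + a ∈ Icc (0:ℝ) 1 := ⟨by linarith [t.2.1, ha.1], by linarith [t.2.2]⟩
  have hset : {x | (t:ℝ) ≤ f x} = {x | (t:ℝ) + a ≤ f x + a} := by
    simp only [add_le_add_iff_right]
  rw [hset]
  exact le_scInt hS hμ _ ht

lemma scInt_add_const_le_max (hS : IsSemicopula S) (hμ : IsCapacity μ)
    (hf : ∀ x, 0 ≤ f x) (ha : 0 ≤ a) :
    scInt S μ (fun x => f x + a)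
      ≤ max a (⨆ t : Ioc (0:ℝ) (1 - a), S ((t:ℝ) + a) (μ {x | (t:ℝ) ≤ f x})) := by
  refine Real.iSup_le (fun t => ?_) (le_max_of_le_left ha)
  rcases le_or_gt (t:ℝ) a with hta | hta
  · rw [integrand_add_const_eq_self_of_le hS hμ hf t.2 hta]
    exact le_max_of_le_left hta
  · have hs : (t:ℝ) - a ∈ Ioc (0:ℝ) (1 - a) := ⟨by linarith, by linarith [t.2.2]⟩
    have hset : {x | (t:ℝ) ≤ f x + a} = {x | (t:ℝ) - a ≤ f x} := by
      simp only [sub_le_iff_le_add]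
    refine le_max_of_le_right ?_
    rw [hset]
    nth_rewrite 1 [← sub_add_cancel (t:ℝ) a]
    exact le_ciSup (f := fun s : Ioc (0:ℝ) (1 - a) => S ((s:ℝ) + a) (μ {x | (s:ℝ) ≤ f x}))
      (hS.bddAbove_range (fun s => ⟨by linarith [s.2.1], by linarith [s.2.2]⟩)
        fun _ => hμ.mem _) ⟨_, hs⟩

end Shift

theorem scInt_shift_formula_general {X : Type*} [MeasurableSpace X]
    (S : ℝ → ℝ → ℝ) (hS : IsSemicopula S) (μ : Set X → ℝ) (hμ : IsCapacity μ)
    (f : X → ℝ) (hf01 : ∀ x, f x ∈ Icc (0:ℝ) 1)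
    (a : ℝ) (ha : a ∈ Icc (0:ℝ) 1) :
    scInt S μ (fun x => f x + a)
      = max a (⨆ t : Ioc (0:ℝ) (1 - a), S ((t:ℝ) + a) (μ {x | (t:ℝ) ≤ f x})) := by
  have hf : ∀ x, 0 ≤ f x := fun x => (hf01 x).1
  exact le_antisymm (scInt_add_const_le_max hS hμ hf ha.1)
    (max_le (le_scInt_add_const hS hμ hf ha) (iSup_shifted_le_scInt_add_const hS hμ hf ha))

theorem scInt_shift_formula {X : Type*} [MeasurableSpace X]
    (S : ℝ → ℝ → ℝ) (hS : IsSemicopula S) (μ : Set X → ℝ) (hμ : IsCapacity μ)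
    (f : X → ℝ) (hf : Measurable f) (hf01 : ∀ x, f x ∈ Icc (0:ℝ) 1)
    (a : ℝ) (ha : a ∈ Icc (0:ℝ) 1) (hfa : ∀ x, f x + a ≤ 1) :
    scInt S μ (fun x => f x + a)
      = max a (⨆ t : Ioc (0:ℝ) (1 - a), S ((t:ℝ) + a) (μ {x | (t:ℝ) ≤ f x})) :=
  scInt_shift_formula_general S hS μ hμ f hf01 a ha
end

section
/- For the Łukasiewicz t-norm S_L(a,b) = max(a+b-1, 0), for every measurable space (X,𝒜), every capacity μ on 𝒜, every measurable f : X → [0,1], and every a ∈ [0,1] such that f + a takes values in [0,1], the integral I(μ, f+a) = sup_{t∈[0,1]} S_L(t, μ({f+a ≥ t})) equals I(μ,f) + a. -/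
/-!
The level set of `f + a` at height `t` is the level set of `f` at `t - a`, and for `a ≥ 0` the
Łukasiewicz t-norm satisfies `S_L(t, v) + a = max (S_L(t + a, v)) a`. So shifting the height by `a`
matches the two suprema, up to the term `a` itself, which is the value of the integrand of `f + a`
at height `a` (its level set there is all of `X`). The heights left over are `t ≤ a`, where the
integrand of `f + a` is `t`, and `t > 1 - a`, where the level set of `f` is empty.
-/

open Set

def lukasiewicz (u v : ℝ) : ℝ := max (u + v - 1) 0

namespace lukasiewicz

lemma le_one {u v : ℝ} (hu : u ≤ 1) (hv : v ≤ 1) : lukasiewicz u v ≤ 1 :=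
  max_le (by linarith) zero_le_one

lemma one_right {u : ℝ} (hu : 0 ≤ u) : lukasiewicz u 1 = u := by
  simp [lukasiewicz, hu]

lemma zero_right {u : ℝ} (hu : u ≤ 1) : lukasiewicz u 0 = 0 := by
  simp [lukasiewicz, hu]

lemma add_eq_max (u v : ℝ) {a : ℝ} (ha : 0 ≤ a) :
    lukasiewicz u v + a = max (lukasiewicz (u + a) v) a := by
  rw [lukasiewicz, lukasiewicz, ← max_add_add_right, zero_add, max_assoc, max_eq_right ha]
  congr 1
  ring

lemma add_left_le (u v : ℝ) {a : ℝ} (ha : 0 ≤ a) :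
    lukasiewicz (u + a) v ≤ lukasiewicz u v + a :=
  add_eq_max u v ha ▸ le_max_left _ _

end lukasiewicz

lemma lukasiewicz_levelSet_eq_self {X : Type*} {μ : Set X → ℝ} {f : X → ℝ} (hμ : μ univ = 1)
    {t : ℝ} (ht : 0 ≤ t) (hf : ∀ x, t ≤ f x) : lukasiewicz t (μ {x | t ≤ f x}) = t := by
  simp [hf, hμ, lukasiewicz.one_right ht]

section
variable {X : Type*} [MeasurableSpace X] {μ : Set X → ℝ} {f : X → ℝ}

lemma le_scInt_lukasiewicz (hμ : ∀ A, μ A ≤ 1) {t : ℝ} (ht : t ∈ Icc (0:ℝ) 1) :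
    lukasiewicz t (μ {x | t ≤ f x}) ≤ scInt lukasiewicz μ f := by
  refine le_ciSup (f := fun t : Icc (0:ℝ) 1 => lukasiewicz t (μ {x | (t:ℝ) ≤ f x}))
    ⟨1, ?_⟩ ⟨t, ht⟩
  rintro _ ⟨s, rfl⟩
  exact lukasiewicz.le_one s.2.2 (hμ _)

lemma scInt_lukasiewicz_le {c : ℝ}
    (h : ∀ t ∈ Icc (0:ℝ) 1, lukasiewicz t (μ {x | t ≤ f x}) ≤ c) :
    scInt lukasiewicz μ f ≤ c :=
  ciSup_le fun t => h t t.2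

lemma le_scInt_lukasiewicz_of_le (hμ : IsCapacity μ) {c : ℝ} (hc : c ∈ Icc (0:ℝ) 1)
    (hf : ∀ x, c ≤ f x) : c ≤ scInt lukasiewicz μ f :=
  lukasiewicz_levelSet_eq_self hμ.univ hc.1 hf ▸ le_scInt_lukasiewicz (fun A => (hμ.mem A).2) hc

lemma scInt_lukasiewicz_add_const_le (hμ : IsCapacity μ) (hf : ∀ x, 0 ≤ f x) {a : ℝ}
    (ha : 0 ≤ a) : scInt lukasiewicz μ (fun x => f x + a) ≤ scInt lukasiewicz μ f + a := by
  refine scInt_lukasiewicz_le fun t ht => ?_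
  rcases le_or_gt t a with hta | hat
  · have h0 : 0 ≤ scInt lukasiewicz μ f := le_scInt_lukasiewicz_of_le hμ (by simp) hf
    rw [lukasiewicz_levelSet_eq_self hμ.univ ht.1 fun x => by linarith [hf x]]
    linarith
  · have hts : t - a ∈ Icc (0:ℝ) 1 := ⟨by linarith, by linarith [ht.2]⟩
    calc lukasiewicz t (μ {x | t ≤ f x + a})
        = lukasiewicz (t - a + a) (μ {x | t - a ≤ f x}) := by simp
      _ ≤ lukasiewicz (t - a) (μ {x | t - a ≤ f x}) + a := lukasiewicz.add_left_le _ _ ha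
      _ ≤ scInt lukasiewicz μ f + a := by
        gcongr
        exact le_scInt_lukasiewicz (fun A => (hμ.mem A).2) hts

lemma scInt_lukasiewicz_add_const_ge (hμ : IsCapacity μ) (hf : ∀ x, 0 ≤ f x) {a : ℝ}
    (ha : a ∈ Icc (0:ℝ) 1) (hfa : ∀ x, f x + a ≤ 1) :
    scInt lukasiewicz μ f + a ≤ scInt lukasiewicz μ (fun x => f x + a) := by
  have ha_le : a ≤ scInt lukasiewicz μ (fun x => f x + a) :=
    le_scInt_lukasiewicz_of_le hμ ha fun x => le_add_of_nonneg_left (hf x)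
  refine le_sub_iff_add_le.mp (scInt_lukasiewicz_le fun t ht => le_sub_iff_add_le.mpr ?_)
  rcases le_or_gt t (1 - a) with hta | hat
  · have hta' : t + a ∈ Icc (0:ℝ) 1 := ⟨by linarith [ht.1, ha.1], by linarith⟩
    rw [lukasiewicz.add_eq_max _ _ ha.1]
    refine max_le ?_ ha_le
    simpa using le_scInt_lukasiewicz (f := fun x => f x + a) (fun A => (hμ.mem A).2) hta'
  · have hempty : {x | t ≤ f x} = ∅ :=
      eq_empty_of_forall_notMem fun x hx => by linarith [hfa x, show t ≤ f x from hx]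
    rwa [hempty, hμ.empty, lukasiewicz.zero_right ht.2, zero_add]

end

theorem lukasiewicz_translation_invariant_general {X : Type*} [MeasurableSpace X]
    (μ : Set X → ℝ) (hμ : IsCapacity μ)
    (f : X → ℝ) (hf01 : ∀ x, f x ∈ Icc (0:ℝ) 1)
    (a : ℝ) (ha : a ∈ Icc (0:ℝ) 1) (hfa : ∀ x, f x + a ≤ 1) :
    scInt (fun u v => max (u + v - 1) 0) μ (fun x => f x + a)
      = scInt (fun u v => max (u + v - 1) 0) μ f + a :=
  le_antisymm (scInt_lukasiewicz_add_const_le hμ (fun x => (hf01 x).1) ha.1)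
    (scInt_lukasiewicz_add_const_ge hμ (fun x => (hf01 x).1) ha hfa)

theorem lukasiewicz_translation_invariant {X : Type*} [MeasurableSpace X]
    (μ : Set X → ℝ) (hμ : IsCapacity μ)
    (f : X → ℝ) (hf : Measurable f) (hf01 : ∀ x, f x ∈ Icc (0:ℝ) 1)
    (a : ℝ) (ha : a ∈ Icc (0:ℝ) 1) (hfa : ∀ x, f x + a ≤ 1) :
    scInt (fun u v => max (u + v - 1) 0) μ (fun x => f x + a)
      = scInt (fun u v => max (u + v - 1) 0) μ f + a :=
  lukasiewicz_translation_invariant_general μ hμ f hf01 a ha hfa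
end

section
/- Let S : [0,1]² → [0,1] be a semicopula such that for all a, b ∈ [0,1]: max(a, S(1,b)) = S(1-a, b) + a. Then S equals the Łukasiewicz t-norm: S(c,b) = max(c + b - 1, 0) for all c, b ∈ [0,1]. -/
open Set

theorem semicopula_functional_eq_lukasiewicz (S : ℝ → ℝ → ℝ) (hS : IsSemicopula S)
    (h : ∀ a ∈ Icc (0:ℝ) 1, ∀ b ∈ Icc (0:ℝ) 1, max a (S 1 b) = S (1 - a) b + a) :
    ∀ c ∈ Icc (0:ℝ) 1, ∀ b ∈ Icc (0:ℝ) 1, S c b = max (c + b - 1) 0 := by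
  intro c hc b hb
  have key := h (1 - c) ⟨by linarith [hc.2], by linarith [hc.1]⟩ b hb
  rw [hS.neutral_left b hb, sub_sub_cancel] at key
  calc S c b = max (1 - c) b - (1 - c) := by linarith
    _ = max (c + b - 1) 0 := by
      rw [← max_sub_sub_right, max_comm]
      congr 1 <;> ring
end

section
/- For any a ∈ [0,1) and b ∈ [0,1], there exists a measurable space (X,𝒜), a capacity μ on 𝒜, and a measurable function f : X → [0,1] with f + a valued in [0,1], such that μ({f ≥ 0}) = 1, μ({f ≥ t}) = b for t ∈ (0, 1-a], and μ({f ≥ t}) = 0 for t ∈ (1-a, 1]. -/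
/-!
On the two-point space `Bool`, take the capacity equal to `b` on both singletons and
`f = (1 - a) · 𝟙_{true}`: its superlevel sets are `univ` for `t ≤ 0`, the singleton `{true}`
for `0 < t ≤ 1 - a`, and `∅` beyond.
-/

open Set

section FlatCapacity

variable {X : Type*}

noncomputable def flatCapacity (b : ℝ) (A : Set X) : ℝ :=
  open Classical in if A = ∅ then 0 else if A = univ then 1 else b

theorem flatCapacity_empty (b : ℝ) : flatCapacity b (∅ : Set X) = 0 := if_pos rfl

theorem flatCapacity_univ [Nonempty X] (b : ℝ) : flatCapacity b (univ : Set X) = 1 := by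
  simp [flatCapacity, univ_nonempty.ne_empty]

theorem flatCapacity_of_ne {b : ℝ} {A : Set X} (h₀ : A ≠ ∅) (h₁ : A ≠ univ) :
    flatCapacity b A = b := by
  simp [flatCapacity, h₀, h₁]

theorem flatCapacity_mem_Icc {b : ℝ} (hb : b ∈ Icc (0:ℝ) 1) (A : Set X) :
    flatCapacity b A ∈ Icc (0:ℝ) 1 := by
  unfold flatCapacity
  split_ifs
  exacts [⟨le_rfl, zero_le_one⟩, ⟨zero_le_one, le_rfl⟩, hb]

theorem flatCapacity_mono {b : ℝ} (hb : b ∈ Icc (0:ℝ) 1) {A B : Set X} (hAB : A ⊆ B) :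
    flatCapacity b A ≤ flatCapacity b B := by
  rcases eq_or_ne A ∅ with rfl | hA₀
  · exact flatCapacity_empty (X := X) b ▸ (flatCapacity_mem_Icc hb B).1
  rcases eq_or_ne B univ with rfl | hB₁
  · have : Nonempty X := (nonempty_iff_ne_empty.2 hA₀).to_type
    exact flatCapacity_univ (X := X) b ▸ (flatCapacity_mem_Icc hb A).2
  have hB₀ : B ≠ ∅ := fun h => hA₀ (subset_empty_iff.1 (h ▸ hAB))
  have hA₁ : A ≠ univ := fun h => hB₁ (univ_subset_iff.1 (h ▸ hAB))
  rw [flatCapacity_of_ne hA₀ hA₁, flatCapacity_of_ne hB₀ hB₁]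

theorem isCapacity_flatCapacity [MeasurableSpace X] [Nonempty X] {b : ℝ}
    (hb : b ∈ Icc (0:ℝ) 1) : IsCapacity (flatCapacity b : Set X → ℝ) where
  mono _ _ := flatCapacity_mono hb
  empty := flatCapacity_empty b
  univ := flatCapacity_univ b
  mem := flatCapacity_mem_Icc hb

end FlatCapacity

section IndicatorSuperlevel

variable {X : Type*} {S : Set X} {c t : ℝ}

theorem setOf_le_indicator_const_of_nonpos (hc : 0 ≤ c) (ht : t ≤ 0) :
    {x | t ≤ S.indicator (fun _ => c) x} = univ :=
  eq_univ_of_forall fun _ => ht.trans (indicator_nonneg (fun _ _ => hc) _)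

theorem setOf_le_indicator_const_of_pos_of_le (ht₀ : 0 < t) (htc : t ≤ c) :
    {x | t ≤ S.indicator (fun _ => c) x} = S := by
  ext x
  by_cases hx : x ∈ S <;> simp [hx, htc, ht₀.not_ge]

theorem setOf_le_indicator_const_of_lt (hc : 0 ≤ c) (hct : c < t) :
    {x | t ≤ S.indicator (fun _ => c) x} = ∅ := by
  ext x
  by_cases hx : x ∈ S <;> simp [hx, hct.not_ge, (hc.trans_lt hct).not_ge]

end IndicatorSuperlevel

theorem witness_capacity_exists (a b : ℝ) (ha : a ∈ Ico (0:ℝ) 1) (hb : b ∈ Icc (0:ℝ) 1) :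
    ∃ (X : Type) (mX : MeasurableSpace X) (μ : Set X → ℝ) (f : X → ℝ),
      IsCapacity μ ∧ Measurable f ∧ (∀ x, f x ∈ Icc (0:ℝ) 1) ∧ (∀ x, f x + a ≤ 1) ∧
      μ {x | (0:ℝ) ≤ f x} = 1 ∧
      (∀ t ∈ Ioc (0:ℝ) (1 - a), μ {x | t ≤ f x} = b) ∧
      (∀ t ∈ Ioc (1 - a) (1:ℝ), μ {x | t ≤ f x} = 0) := by
  have hc₀ : 0 ≤ 1 - a := by linarith [ha.2]
  have hc₁ : 1 - a ≤ 1 := by linarith [ha.1]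
  have hf_le (x : Bool) : ({true} : Set Bool).indicator (fun _ => 1 - a) x ≤ 1 - a :=
    indicator_le_self' (fun _ _ => hc₀) x
  refine ⟨Bool, inferInstance, flatCapacity b, ({true} : Set Bool).indicator (fun _ => 1 - a),
    isCapacity_flatCapacity hb, measurable_of_countable _,
    fun x => ⟨indicator_nonneg (fun _ _ => hc₀) x, (hf_le x).trans hc₁⟩,
    fun x => by linarith [hf_le x], ?_, ?_, ?_⟩
  · rw [setOf_le_indicator_const_of_nonpos hc₀ le_rfl, flatCapacity_univ]
  · rintro t ⟨ht₀, htc⟩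
    rw [setOf_le_indicator_const_of_pos_of_le ht₀ htc]
    exact flatCapacity_of_ne (singleton_ne_empty true) (singleton_ne_univ true)
  · rintro t ⟨hct, -⟩
    rw [setOf_le_indicator_const_of_lt hc₀ hct, flatCapacity_empty]
end

section
/- The Łukasiewicz t-norm S_L(a,b) = max(a+b-1,0) is the pointwise smallest function S : [0,1]² → [0,1] satisfying S(x,1) = x, S(1,y) = y, and the translation identity max(a, S(1,b)) = S(1-a,b) + a for all a,b ∈ [0,1]; in fact it is the unique semicopula satisfying that identity. -/
/-!
Put a = 1 - x in the translation identity: since S(1,y) = y it reads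
max(1-x, y) = S(x,y) + (1-x), so S(x,y) = max(x+y-1, 0). The identity alone thus forces
S to be the Łukasiewicz t-norm, which gives minimality and uniqueness at once.
-/

open Set

theorem max_sub_zero_add {α : Type*} [AddCommGroup α] [LinearOrder α] [IsOrderedAddMonoid α]
    (a b : α) : max (b - a) 0 + a = max a b := by
  rw [← max_add_add_right, sub_add_cancel, zero_add, max_comm]

theorem eq_lukasiewicz_of_translation {S : ℝ → ℝ → ℝ}
    (hleft : ∀ y ∈ Icc (0:ℝ) 1, S 1 y = y)
    (htrans : ∀ a ∈ Icc (0:ℝ) 1, ∀ b ∈ Icc (0:ℝ) 1, max a (S 1 b) = S (1 - a) b + a)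
    {x y : ℝ} (hx : x ∈ Icc (0:ℝ) 1) (hy : y ∈ Icc (0:ℝ) 1) :
    S x y = max (x + y - 1) 0 := by
  have h := htrans (1 - x) ⟨by linarith [hx.2], by linarith [hx.1]⟩ y hy
  rw [hleft y hy, sub_sub_cancel, ← max_sub_zero_add] at h
  rw [← add_right_cancel h, sub_sub_eq_add_sub, add_comm y x]

theorem lukasiewicz_smallest_and_unique :
    (∀ a ∈ Icc (0:ℝ) 1, max (a + 1 - 1) 0 = a) ∧
    (∀ b ∈ Icc (0:ℝ) 1, max (1 + b - 1) 0 = b) ∧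
    (∀ a ∈ Icc (0:ℝ) 1, ∀ b ∈ Icc (0:ℝ) 1,
      max a (max (1 + b - 1) 0) = max (1 - a + b - 1) 0 + a) ∧
    (∀ S : ℝ → ℝ → ℝ, (∀ x ∈ Icc (0:ℝ) 1, ∀ y ∈ Icc (0:ℝ) 1, S x y ∈ Icc (0:ℝ) 1) →
      (∀ x ∈ Icc (0:ℝ) 1, S x 1 = x) → (∀ y ∈ Icc (0:ℝ) 1, S 1 y = y) →
      (∀ a ∈ Icc (0:ℝ) 1, ∀ b ∈ Icc (0:ℝ) 1, max a (S 1 b) = S (1 - a) b + a) →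
      ∀ x ∈ Icc (0:ℝ) 1, ∀ y ∈ Icc (0:ℝ) 1, max (x + y - 1) 0 ≤ S x y) ∧
    (∀ S : ℝ → ℝ → ℝ, IsSemicopula S →
      (∀ a ∈ Icc (0:ℝ) 1, ∀ b ∈ Icc (0:ℝ) 1, max a (S 1 b) = S (1 - a) b + a) →
      ∀ x ∈ Icc (0:ℝ) 1, ∀ y ∈ Icc (0:ℝ) 1, S x y = max (x + y - 1) 0) := by
  refine ⟨fun a ha => ?_, fun b hb => ?_, fun a _ b hb => ?_,
    fun S _ _ hleft htrans x hx y hy => (eq_lukasiewicz_of_translation hleft htrans hx hy).ge,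
    fun S hS htrans x hx y hy => eq_lukasiewicz_of_translation hS.neutral_left htrans hx hy⟩
  · rw [add_sub_cancel_right, max_eq_left ha.1]
  · rw [add_sub_cancel_left, max_eq_left hb.1]
  · rw [add_sub_cancel_left, max_eq_left hb.1, show 1 - a + b - 1 = b - a by ring,
      max_sub_zero_add]
end
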